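/- Let n be odd and let v_1,…,v_n ∈ ℝ³ be the edge vectors of a generic closed n-gon. If u_1,…,u_n and w_1,…,w_n are both support systems for this polygon, then either w_i = u_i for all i, or w_i = −u_i for all i. That is, for odd n the support system of a regular generic polygon is unique up to sign. -/

import Mathlib

open Matrix

/-!
Both `u i` and `w i` are orthogonal to `v i = u (i - 1) ⨯₃ u i` and to
`v (i + 1) = u i ⨯₃ u (i + 1)`, which span a plane by genericity, so `w i = c i • u i`.
Bilinearity of the cross product turns the support equations into `c i * c (i + 1) = 1`, hence
`c (i + 2) = c i`; since `2` generates `ℤ/nℤ` for odd `n`, `c` is constant, and `c 0 * c 0 = 1`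
leaves `c = 1` or `c = -1`.
-/

section CrossProduct

variable {F : Type*} [Field F]

theorem crossProduct_crossProduct_eq_zero {x a b : Fin 3 → F} (ha : x ⬝ᵥ a = 0)
    (hb : x ⬝ᵥ b = 0) : x ⨯₃ (a ⨯₃ b) = 0 := by
  rw [cross_cross_eq_smul_sub_smul', hb, dotProduct_comm, ha, zero_smul, zero_smul, sub_zero]

theorem exists_eq_smul_of_crossProduct_eq_zero {x z : Fin 3 → F} (h : x ⨯₃ z = 0)
    (hz : z ≠ 0) : ∃ c : F, x = c • z := by
  by_contra! hne
  have hind : LinearIndependent F ![z, x] :=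
    (LinearIndependent.pair_iff' hz).2 fun c hc => hne c hc.symm
  exact crossProduct_ne_zero_iff_linearIndependent.2 hind (by rw [← cross_anticomm, h, neg_zero])

theorem exists_eq_smul_of_dotProduct_eq_zero {x y a b : Fin 3 → F} (hxa : x ⬝ᵥ a = 0)
    (hxb : x ⬝ᵥ b = 0) (hya : y ⬝ᵥ a = 0) (hyb : y ⬝ᵥ b = 0) (hab : a ⨯₃ b ≠ 0)
    (hy : y ≠ 0) : ∃ c : F, x = c • y := by
  obtain ⟨s, hs⟩ :=
    exists_eq_smul_of_crossProduct_eq_zero (crossProduct_crossProduct_eq_zero hxa hxb) hab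
  obtain ⟨t, ht⟩ :=
    exists_eq_smul_of_crossProduct_eq_zero (crossProduct_crossProduct_eq_zero hya hyb) hab
  have ht0 : t ≠ 0 := by rintro rfl; exact hy (by rw [ht, zero_smul])
  exact ⟨s / t, by rw [hs, ht, smul_smul, div_mul_cancel₀ s ht0]⟩

end CrossProduct

theorem Fin.periodic_two_of_mul_apply_add_one_eq_one {n : ℕ} [NeZero n] {M : Type*}
    [CommMonoid M] {c : Fin n → M} (hc : ∀ i, c i * c (i + 1) = 1) : Function.Periodic c 2 := by
  intro i
  have hc' := hc (i + 1)
  rw [show i + 1 + 1 = i + 2 by open Fin.CommRing in ring] at hc'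
  calc c (i + 2) = c i * c (i + 1) * c (i + 2) := by rw [hc i, one_mul]
    _ = c i := by rw [mul_assoc, hc', mul_one]

open Fin.CommRing in
theorem Fin.apply_eq_apply_zero_of_periodic_two {n : ℕ} [NeZero n] (hn : Odd n) {α : Type*}
    {c : Fin n → α} (hc : Function.Periodic c 2) (k : Fin n) : c k = c 0 := by
  obtain ⟨r, rfl⟩ := Fin.even_of_odd hn k
  rw [← Fin.cast_val_eq_self r]
  induction r.val with
  | zero => simp
  | succ m ih => rw [← ih, ← hc (↑m + ↑m)]; congr 1; push_cast; ring

theorem Fin.eq_one_or_eq_neg_one_of_mul_apply_add_one_eq_one {n : ℕ} [NeZero n] (hn : Odd n)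
    {R : Type*} [CommRing R] [NoZeroDivisors R] {c : Fin n → R}
    (hc : ∀ i, c i * c (i + 1) = 1) : (∀ i, c i = 1) ∨ (∀ i, c i = -1) := by
  have hconst := Fin.apply_eq_apply_zero_of_periodic_two hn
    (Fin.periodic_two_of_mul_apply_add_one_eq_one hc)
  have hsq := hc 0
  rw [zero_add, hconst 1] at hsq
  rcases mul_self_eq_one_iff.1 hsq with h | h
  · exact Or.inl fun i => (hconst i).trans h
  · exact Or.inr fun i => (hconst i).trans h

section SupportSystem

variable {F : Type*} [Field F] {n : ℕ} [NeZero n]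

def IsSupportSystem (v u : Fin n → Fin 3 → F) : Prop :=
  ∀ i, u i ⨯₃ u (i + 1) = v (i + 1)

variable {v u w : Fin n → Fin 3 → F}

theorem IsSupportSystem.dotProduct_eq_zero (hu : IsSupportSystem v u) (i : Fin n) :
    u i ⬝ᵥ v i = 0 := by
  have h := hu (i - 1)
  rw [sub_add_cancel] at h
  rw [← h]
  exact dot_cross_self _ _

theorem IsSupportSystem.dotProduct_succ_eq_zero (hu : IsSupportSystem v u) (i : Fin n) :
    u i ⬝ᵥ v (i + 1) = 0 := by
  rw [← hu i]
  exact dot_self_cross _ _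

theorem IsSupportSystem.ne_zero (hu : IsSupportSystem v u) {i : Fin n} (hv : v (i + 1) ≠ 0) :
    u i ≠ 0 :=
  fun h => hv (by rw [← hu i, h, map_zero, LinearMap.zero_apply])

theorem IsSupportSystem.exists_eq_smul (hu : IsSupportSystem v u) (hw : IsSupportSystem v w)
    {i : Fin n} (hv : v i ⨯₃ v (i + 1) ≠ 0) : ∃ c : F, w i = c • u i :=
  exists_eq_smul_of_dotProduct_eq_zero (hw.dotProduct_eq_zero i) (hw.dotProduct_succ_eq_zero i)
    (hu.dotProduct_eq_zero i) (hu.dotProduct_succ_eq_zero i) hv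
    (hu.ne_zero fun h => hv (by rw [h, map_zero]))

theorem IsSupportSystem.mul_apply_add_one_eq_one (hu : IsSupportSystem v u)
    (hw : IsSupportSystem v w) {c : Fin n → F} (hc : ∀ i, w i = c i • u i) {i : Fin n}
    (hv : v (i + 1) ≠ 0) : c i * c (i + 1) = 1 := by
  refine smul_left_injective F hv ?_
  calc (c i * c (i + 1)) • v (i + 1) = (c i • u i) ⨯₃ (c (i + 1) • u (i + 1)) := by
        rw [map_smul, map_smul, LinearMap.smul_apply, smul_smul, mul_comm, hu]
    _ = (1 : F) • v (i + 1) := by rw [← hc, ← hc, hw, one_smul]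

end SupportSystem

theorem odd_polygon_support_unique_up_to_sign_general (n : ℕ) (hn : Odd n) [NeZero n]
    (v : Fin n → Fin 3 → ℝ)
    (Δ : Fin n → ℝ)
    (hΔ : ∀ i, Δ i = v i ⬝ᵥ (v (i + 1) ⨯₃ v (i + 2)))
    (hgen : ∀ i, Δ i ≠ 0)
    (u w : Fin n → Fin 3 → ℝ)
    (hu : ∀ i, u i ⨯₃ u (i + 1) = v (i + 1))
    (hw : ∀ i, w i ⨯₃ w (i + 1) = v (i + 1)) :
    (∀ i, w i = u i) ∨ (∀ i, w i = -u i) := by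
  have hcross : ∀ i, v i ⨯₃ v (i + 1) ≠ 0 := fun i h => hgen (i - 1) <| by
    rw [hΔ, sub_add_cancel, show i - 1 + 2 = i + 1 by open Fin.CommRing in ring, h,
      dotProduct_zero]
  choose c hc using fun i => IsSupportSystem.exists_eq_smul hu hw (hcross i)
  have hprod : ∀ i, c i * c (i + 1) = 1 := fun i =>
    IsSupportSystem.mul_apply_add_one_eq_one hu hw hc fun h => hcross i (by rw [h, map_zero])
  rcases Fin.eq_one_or_eq_neg_one_of_mul_apply_add_one_eq_one hn hprod with h | h
  · exact Or.inl fun i => by rw [hc, h, one_smul]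
  · exact Or.inr fun i => by rw [hc, h, neg_one_smul]

/-- Let `n` be odd and `v` the edge vectors of a generic closed `n`-gon
(indices mod `n`).  If `u` and `w` are both support systems for this polygon, then either
`w i = u i` for all `i` or `w i = -u i` for all `i`: the support system is unique up to sign. -/
theorem odd_polygon_support_unique_up_to_sign (n : ℕ) (hn : Odd n) [NeZero n]
    (v : Fin n → Fin 3 → ℝ)
    (hclosed : ∑ i, v i = 0)
    (Δ : Fin n → ℝ)
    (hΔ : ∀ i, Δ i = v i ⬝ᵥ (v (i + 1) ⨯₃ v (i + 2)))
    (hgen : ∀ i, Δ i ≠ 0)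
    (u w : Fin n → Fin 3 → ℝ)
    (hu : ∀ i, u i ⨯₃ u (i + 1) = v (i + 1))
    (hw : ∀ i, w i ⨯₃ w (i + 1) = v (i + 1)) :
    (∀ i, w i = u i) ∨ (∀ i, w i = -u i) :=
  odd_polygon_support_unique_up_to_sign_general n hn v Δ hΔ hgen u w hu hw
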